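/- Let X, P, Y be real Banach spaces, F : X × P ⇒ Y and G : X ⇒ Y be multifunctions. Suppose F is Lipschitz-like with respect to x uniformly in p around ((x̄,p̄),ȳ) ∈ Gr F with constant l > 0, G is Lipschitz-like around (x̄,z̄) ∈ Gr G with constant k > 0, and the pair (F,G) is locally sum-stable around (x̄,p̄,ȳ,z̄). Then the multifunction H : X × P ⇒ Y defined by H(x,p) := F(x,p) + G(x) is Lipschitz-like with respect to x uniformly in p around ((x̄,p̄), ȳ + z̄) with constant l + k. -/

import Mathlib

open Metric Set Filter Topology Pointwise

/-- `F : X × P ⇒ Y` is Lipschitz-like with respect to `x` uniformly in `p`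
around `((xb, pb), yb)` with constant `L`. -/
def LipschitzLikeWrtXUnifP {X P Y : Type*} [NormedAddCommGroup X]
    [NormedAddCommGroup P] [NormedAddCommGroup Y] (F : X × P → Set Y)
    (xb : X) (pb : P) (yb : Y) (L : ℝ) : Prop :=
  ∃ U ∈ 𝓝 xb, ∃ V ∈ 𝓝 pb, ∃ W ∈ 𝓝 yb, ∀ p ∈ V, ∀ x ∈ U, ∀ u ∈ U,
    F (x, p) ∩ W ⊆ F (u, p) + closedBall (0 : Y) (L * ‖x - u‖)

/-- `G : X ⇒ Y` is Lipschitz-like around `(xb, zb)` with constant `L`. -/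
def LipschitzLikeAround {X Y : Type*} [NormedAddCommGroup X] [NormedAddCommGroup Y]
    (G : X → Set Y) (xb : X) (zb : Y) (L : ℝ) : Prop :=
  ∃ U ∈ 𝓝 xb, ∃ V ∈ 𝓝 zb, ∀ x ∈ U, ∀ u ∈ U,
    G x ∩ V ⊆ G u + closedBall (0 : Y) (L * ‖x - u‖)

/-- The pair `(F, G)` is locally sum-stable around `(xb, pb, yb, zb)`. -/
def LocSumStableP {X P Y : Type*} [NormedAddCommGroup X] [NormedAddCommGroup P]
    [NormedAddCommGroup Y] (F : X × P → Set Y) (G : X → Set Y)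
    (xb : X) (pb : P) (yb zb : Y) : Prop :=
  ∀ ε > (0 : ℝ), ∃ δ > (0 : ℝ), ∀ x ∈ ball xb δ, ∀ p ∈ ball pb δ,
    ∀ w ∈ (F (x, p) + G x) ∩ ball (yb + zb) δ,
      ∃ y ∈ F (x, p) ∩ ball yb ε, ∃ z ∈ G x ∩ ball zb ε, w = y + z

/-! Local sum-stability splits a point of `F (x, p) + G x` near `yb + zb` as `y + z` with `y` near
`yb` and `z` near `zb`, so that the Lipschitz-like estimates of `F` and `G` apply to the summands
separately; adding the two error balls gives the constant `l + k`. -/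

theorem closedBall_zero_add_closedBall_zero_subset {E : Type*} [SeminormedAddCommGroup E]
    (r s : ℝ) : closedBall (0 : E) r + closedBall 0 s ⊆ closedBall 0 (r + s) := by
  rintro _ ⟨a, ha, b, hb, rfl⟩
  rw [mem_closedBall_zero_iff] at ha hb ⊢
  exact norm_add_le_of_le ha hb

theorem add_subset_add_add_closedBall {E : Type*} [SeminormedAddCommGroup E]
    {A A' B B' : Set E} {r s : ℝ} (hA : A ⊆ A' + closedBall 0 r)
    (hB : B ⊆ B' + closedBall 0 s) : A + B ⊆ A' + B' + closedBall 0 (r + s) :=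
  calc A + B ⊆ (A' + closedBall 0 r) + (B' + closedBall 0 s) := add_subset_add hA hB
    _ = A' + B' + (closedBall 0 r + closedBall 0 s) := add_add_add_comm _ _ _ _
    _ ⊆ A' + B' + closedBall 0 (r + s) :=
      add_subset_add_left (closedBall_zero_add_closedBall_zero_subset r s)

theorem LocSumStableP.exists_subset_inter_add_inter {X P Y : Type*} [NormedAddCommGroup X]
    [NormedAddCommGroup P] [NormedAddCommGroup Y] {F : X × P → Set Y} {G : X → Set Y}
    {xb : X} {pb : P} {yb zb : Y} (hsum : LocSumStableP F G xb pb yb zb)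
    {W V : Set Y} (hW : W ∈ 𝓝 yb) (hV : V ∈ 𝓝 zb) :
    ∃ δ > 0, ∀ x ∈ ball xb δ, ∀ p ∈ ball pb δ,
      (F (x, p) + G x) ∩ ball (yb + zb) δ ⊆ F (x, p) ∩ W + G x ∩ V := by
  obtain ⟨εW, hεW, hballW⟩ := Metric.mem_nhds_iff.1 hW
  obtain ⟨εV, hεV, hballV⟩ := Metric.mem_nhds_iff.1 hV
  obtain ⟨δ, hδ, hsplit⟩ := hsum (min εW εV) (lt_min hεW hεV)
  refine ⟨δ, hδ, fun x hx p hp w hw => ?_⟩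
  obtain ⟨y, ⟨hyF, hy⟩, z, ⟨hzG, hz⟩, rfl⟩ := hsplit x hx p hp w hw
  exact add_mem_add ⟨hyF, hballW (ball_subset_ball (min_le_left _ _) hy)⟩
    ⟨hzG, hballV (ball_subset_ball (min_le_right _ _) hz)⟩

theorem stmt12_general {X P Y : Type*}
    [NormedAddCommGroup X]
    [NormedAddCommGroup P]
    [NormedAddCommGroup Y]
    (F : X × P → Set Y) (G : X → Set Y) (xb : X) (pb : P) (yb zb : Y)
    (l k : ℝ)
    (hF : LipschitzLikeWrtXUnifP F xb pb yb l)
    (hG : LipschitzLikeAround G xb zb k)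
    (hsum : LocSumStableP F G xb pb yb zb) :
    LipschitzLikeWrtXUnifP (fun q => F q + G q.1) xb pb (yb + zb) (l + k) := by
  obtain ⟨UF, hUF, VF, hVF, WF, hWF, hFlip⟩ := hF
  obtain ⟨UG, hUG, VG, hVG, hGlip⟩ := hG
  obtain ⟨δ, hδ, hsplit⟩ := hsum.exists_subset_inter_add_inter hWF hVG
  refine ⟨ball xb δ ∩ (UF ∩ UG), inter_mem (ball_mem_nhds _ hδ) (inter_mem hUF hUG),
    ball pb δ ∩ VF, inter_mem (ball_mem_nhds _ hδ) hVF,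
    ball (yb + zb) δ, ball_mem_nhds _ hδ, ?_⟩
  rintro p ⟨hpδ, hpF⟩ x ⟨hxδ, hxF, hxG⟩ u ⟨-, huF, huG⟩
  calc (F (x, p) + G x) ∩ ball (yb + zb) δ ⊆ F (x, p) ∩ WF + G x ∩ VG := hsplit x hxδ p hpδ
    _ ⊆ F (u, p) + G u + closedBall 0 (l * ‖x - u‖ + k * ‖x - u‖) :=
      add_subset_add_add_closedBall (hFlip p hpF x hxF u huF) (hGlip x hxG u huG)
    _ = F (u, p) + G u + closedBall 0 ((l + k) * ‖x - u‖) := by rw [add_mul]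

/-- parametric sum of Lipschitz-like multifunctions. -/
theorem stmt12 {X P Y : Type*}
    [NormedAddCommGroup X] [NormedSpace ℝ X] [CompleteSpace X]
    [NormedAddCommGroup P] [NormedSpace ℝ P] [CompleteSpace P]
    [NormedAddCommGroup Y] [NormedSpace ℝ Y] [CompleteSpace Y]
    (F : X × P → Set Y) (G : X → Set Y) (xb : X) (pb : P) (yb zb : Y)
    (hybF : yb ∈ F (xb, pb)) (hzbG : zb ∈ G xb)
    (l k : ℝ) (hl : 0 < l) (hk : 0 < k)
    (hF : LipschitzLikeWrtXUnifP F xb pb yb l)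
    (hG : LipschitzLikeAround G xb zb k)
    (hsum : LocSumStableP F G xb pb yb zb) :
    LipschitzLikeWrtXUnifP (fun q => F q + G q.1) xb pb (yb + zb) (l + k) :=
  stmt12_general F G xb pb yb zb l k hF hG hsum
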